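/- Let $f:[0,1]\to\mathbb{R}$ be differentiable with $f(0)\ge 0$, $f(t)\ge 0$, and suppose $f'(t) \le c(f(t)^{1/2} + f(t))$ for all $t\in[0,1]$, where $c>0$. Then for all $t\in[0,1]$, $f(t) \le \left(-1 + (1+f(0)^{1/2})e^{ct/2}\right)^2$. -/

import Mathlib

/-!
Substituting `u = √y` turns `y' = k (√y + y)` into the linear equation `u' = k (1 + u) / 2`,
whence the explicit solution `(-1 + A e^{kt/2})²` with `A = 1 + √y(0)`. Raising both `A` and
`k` by `ε > 0` gives a strict supersolution which stays positive, so the barrier principle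
`image_le_of_deriv_right_lt_deriv_boundary` keeps `f` below it; let `ε → 0`.
-/

open Real Set Filter Topology

noncomputable def sqrtAddODESol (A k t : ℝ) : ℝ := (-1 + A * exp (k * t / 2)) ^ 2

lemma hasDerivAt_sqrtAddODESol (A k t : ℝ) :
    HasDerivAt (sqrtAddODESol A k)
      (k * ((-1 + A * exp (k * t / 2)) + (-1 + A * exp (k * t / 2)) ^ 2)) t := by
  have hlin : HasDerivAt (fun x : ℝ => k * x / 2) (k / 2) t := by
    simpa using ((hasDerivAt_id t).const_mul k).div_const 2
  refine (((hlin.exp.const_mul A).const_add (-1)).pow 2).congr_deriv ?_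
  ring

lemma sqrtAddODESol_base_pos {A k t : ℝ} (hA : 1 < A) (hk : 0 ≤ k) (ht : 0 ≤ t) :
    0 < -1 + A * exp (k * t / 2) := by
  have : 1 ≤ exp (k * t / 2) := one_le_exp (by positivity)
  nlinarith

lemma le_sqrtAddODESol_of_lt {c k A b : ℝ} {f : ℝ → ℝ} (hk : 0 ≤ k) (hck : c < k) (hA : 1 < A)
    (h0 : f 0 ≤ (A - 1) ^ 2) (hdiff : ∀ t ∈ Icc 0 b, DifferentiableAt ℝ f t)
    (hder : ∀ t ∈ Icc 0 b, deriv f t ≤ c * (√(f t) + f t)) :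
    ∀ t ∈ Icc 0 b, f t ≤ sqrtAddODESol A k t := by
  refine image_le_of_deriv_right_lt_deriv_boundary
    (fun x hx => (hdiff x hx).continuousAt.continuousWithinAt)
    (fun x hx => (hdiff x (Ico_subset_Icc_self hx)).hasDerivAt.hasDerivWithinAt)
    (by simpa [sqrtAddODESol, sub_eq_neg_add] using h0) (hasDerivAt_sqrtAddODESol A k) ?_
  intro x hx hfx
  set u := -1 + A * exp (k * x / 2)
  have hu : 0 < u := sqrtAddODESol_base_pos hA hk hx.1
  replace hfx : f x = u ^ 2 := hfx
  calc deriv f x ≤ c * (u + u ^ 2) := by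
        simpa only [hfx, sqrt_sq hu.le] using hder x (Ico_subset_Icc_self hx)
    _ < k * (u + u ^ 2) := by gcongr

lemma le_sqrtAddODESol_of_forall_pos {y A k t : ℝ}
    (h : ∀ ε > 0, y ≤ sqrtAddODESol (A + ε) (k + ε) t) : y ≤ sqrtAddODESol A k t := by
  have hcont : ContinuousAt (fun ε => sqrtAddODESol (A + ε) (k + ε) t) 0 := by
    unfold sqrtAddODESol
    fun_prop
  have htend : Tendsto (fun ε => sqrtAddODESol (A + ε) (k + ε) t) (𝓝[>] 0)
      (𝓝 (sqrtAddODESol A k t)) := by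
    simpa using hcont.tendsto.mono_left nhdsWithin_le_nhds
  exact ge_of_tendsto htend (eventually_mem_nhdsWithin.mono h)

theorem stmt0_general (c : ℝ) (hc : 0 < c) (f : ℝ → ℝ)
    (hdiff : ∀ t ∈ Set.Icc (0:ℝ) 1, DifferentiableAt ℝ f t)
    (h0 : 0 ≤ f 0)
    (hder : ∀ t ∈ Set.Icc (0:ℝ) 1, deriv f t ≤ c * (Real.sqrt (f t) + f t)) :
    ∀ t ∈ Set.Icc (0:ℝ) 1,
      f t ≤ (-1 + (1 + Real.sqrt (f 0)) * Real.exp (c * t / 2)) ^ 2 := by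
  intro t ht
  refine le_sqrtAddODESol_of_forall_pos fun ε hε => ?_
  have hA : 1 < 1 + √(f 0) + ε := by linarith [sqrt_nonneg (f 0)]
  have hinit : f 0 ≤ (1 + √(f 0) + ε - 1) ^ 2 := by
    nlinarith [sq_sqrt h0, sqrt_nonneg (f 0)]
  exact le_sqrtAddODESol_of_lt (by linarith) (by linarith) hA hinit hdiff hder t ht

/-- ODE comparison: a nonnegative differentiable subsolution of
`f' = c (√f + f)` on `[0,1]` is bounded by the explicit solution
`(-1 + (1 + √f(0)) e^{ct/2})²`. -/
theorem stmt0 (c : ℝ) (hc : 0 < c) (f : ℝ → ℝ)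
    (hdiff : ∀ t ∈ Set.Icc (0:ℝ) 1, DifferentiableAt ℝ f t)
    (h0 : 0 ≤ f 0)
    (hnn : ∀ t ∈ Set.Icc (0:ℝ) 1, 0 ≤ f t)
    (hder : ∀ t ∈ Set.Icc (0:ℝ) 1, deriv f t ≤ c * (Real.sqrt (f t) + f t)) :
    ∀ t ∈ Set.Icc (0:ℝ) 1,
      f t ≤ (-1 + (1 + Real.sqrt (f 0)) * Real.exp (c * t / 2)) ^ 2 :=
  stmt0_general c hc f hdiff h0 hder
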